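/- Let H be a finite-dimensional Hopf algebra with bijective antipode and V, W finite-dimensional vector spaces. The map R': Hom(V,W) ⊗ H → Hom(V ⊗ H, W ⊗ H), R'(f ⊗ h)(v ⊗ t) = f(v) ⊗ th, is an injective H*-module map, where H* acts on the right on H-factors via t ↽' α = ⟨α, S⁻¹(t₂)⟩ t₁, on Hom(V⊗H, W⊗H) via (T·α)(m) = (T(m·S⁻¹(α₂)))·α₁, and moreover R' is an algebra homomorphism End(V) ⊗ H^op → End(V ⊗ H) when V = W. -/

import Mathlib

open TensorProduct

/-- The right action `↽'` of `H*` on `H`: `t ↽' α = ⟨α, S⁻¹(t₂)⟩ t₁`. -/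
noncomputable def rAct {k H : Type*} [CommSemiring k] [Semiring H] [HopfAlgebra k H]
    (Sinv : H →ₗ[k] H) (α : Module.Dual k H) : H →ₗ[k] H :=
  (TensorProduct.rid k H).toLinearMap ∘ₗ
    (TensorProduct.map LinearMap.id (α ∘ₗ Sinv)) ∘ₗ (Coalgebra.comul (R := k))

/-- The map `R' : Hom(V,W) ⊗ H → Hom(V ⊗ H, W ⊗ H)`, `R'(f ⊗ h)(v ⊗ t) = f(v) ⊗ th`. -/
noncomputable def Rmap (k H : Type*) [CommSemiring k] [Semiring H] [Algebra k H]
    (V W : Type*) [AddCommMonoid V] [Module k V] [AddCommMonoid W] [Module k W] :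
    (V →ₗ[k] W) ⊗[k] H →ₗ[k] (V ⊗[k] H →ₗ[k] W ⊗[k] H) :=
  TensorProduct.homTensorHomMap (RingHom.id k) V H W H ∘ₗ
    LinearMap.lTensor (V →ₗ[k] W) ((LinearMap.mul k H).flip)

/-!
`R'(z)(v ⊗ 1)` is the image of `z` under the canonical isomorphism
`Hom(V, W) ⊗ H ≅ Hom(V, W ⊗ H)` (`V` finite-dimensional), so `R'` is injective; multiplicativity
and the unit are checked on pure tensors. On pure tensors, `H*`-linearity reduces to the identity
`∑ᵢ ((t ↽' αBᵢ ∘ S⁻¹) h) ↽' αAᵢ = t (h ↽' α)` in `H`, where `α(xy) = ∑ᵢ αAᵢ(x) αBᵢ(y)`.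
In Sweedler notation the left side is `t₁h₁ ⟨α, S⁻¹(t₂h₂) S⁻²(t₃)⟩ = t₁h₁ ⟨α, S⁻¹(S⁻¹(t₃) t₂ h₂)⟩`,
and `t₁ ⊗ S⁻¹(t₃) t₂ = t ⊗ 1` collapses it to `t h₁ ⟨α, S⁻¹(h₂)⟩`.
-/

open Coalgebra HopfAlgebra

section AntipodeInverse

variable {k H : Type*} [CommSemiring k] [Semiring H] [HopfAlgebra k H] {Sinv : H →ₗ[k] H}

theorem antipodeInv_one (hS1 : ∀ x, Sinv (antipode k x) = x) : Sinv 1 = 1 := by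
  simpa using hS1 1

theorem antipodeInv_mul (hS1 : ∀ x, Sinv (antipode k x) = x)
    (hS2 : ∀ x, antipode k (Sinv x) = x) (a b : H) : Sinv (a * b) = Sinv b * Sinv a := by
  rw [← hS1 (Sinv b * Sinv a), antipode_mul_antidistrib, hS2, hS2]

theorem sum_antipodeInv_mul_eq_algebraMap_counit (hS1 : ∀ x, Sinv (antipode k x) = x)
    (hS2 : ∀ x, antipode k (Sinv x) = x) {ι : Type*} {a : H} (rep : Repr k a ι) :
    ∑ i ∈ rep.index, Sinv (rep.right i) * rep.left i = algebraMap k H (counit a) := by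
  calc ∑ i ∈ rep.index, Sinv (rep.right i) * rep.left i
      = Sinv (∑ i ∈ rep.index, antipode k (rep.left i) * rep.right i) := by
        simp only [map_sum, antipodeInv_mul hS1 hS2, hS1]
    _ = algebraMap k H (counit a) := by
        rw [sum_antipode_mul_eq_algebraMap_counit, Algebra.algebraMap_eq_smul_one, map_smul,
          antipodeInv_one hS1]

theorem sum_tmul_antipodeInv_mul_eq (hS1 : ∀ x, Sinv (antipode k x) = x)
    (hS2 : ∀ x, antipode k (Sinv x) = x) {ι κ : Type*} {t : H} (rep : Repr k t ι)
    (repL : (i : ι) → Repr k (rep.left i) κ) :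
    ∑ i ∈ rep.index, ∑ j ∈ (repL i).index,
      (repL i).left j ⊗ₜ[k] (Sinv (rep.right i) * (repL i).right j) = t ⊗ₜ[k] (1 : H) := by
  let g : H ⊗[k] H →ₗ[k] H := TensorProduct.lift ((LinearMap.mul k H).flip.compl₂ Sinv)
  have hg : ∀ x y, g (x ⊗ₜ y) = Sinv y * x := fun _ _ => rfl
  have coassoc := congr(LinearMap.lTensor H g
    $(sum_tmul_tmul_eq rep repL (fun i => ℛ k (rep.right i))))
  simp only [map_sum, LinearMap.lTensor_tmul, hg, ← tmul_sum,
    sum_antipodeInv_mul_eq_algebraMap_counit hS1 hS2] at coassoc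
  rw [coassoc]
  have counit_right :=
    congr(LinearMap.lTensor H (Algebra.linearMap k H) $(sum_tmul_counit_eq rep))
  simpa only [map_sum, LinearMap.lTensor_tmul, Algebra.linearMap_apply, map_one] using
    counit_right

end AntipodeInverse

section RightAction

variable {k H : Type*} [CommSemiring k] [Semiring H] [HopfAlgebra k H] (Sinv : H →ₗ[k] H)

theorem rAct_apply (β : Module.Dual k H) {ι : Type*} {x : H} (rep : Repr k x ι) :
    rAct Sinv β x = ∑ i ∈ rep.index, β (Sinv (rep.right i)) • rep.left i := by
  simp [rAct, ← rep.eq]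

variable {Sinv} in
theorem sum_rAct_rAct_mul (hS1 : ∀ x, Sinv (antipode k x) = x)
    (hS2 : ∀ x, antipode k (Sinv x) = x) {α : Module.Dual k H} {ι : Type*} [Fintype ι]
    {αA αB : ι → Module.Dual k H} (hα : ∀ x y, α (x * y) = ∑ i, αA i x * αB i y) (t h : H) :
    ∑ i, rAct Sinv (αA i) (rAct Sinv (αB i ∘ₗ Sinv) t * h) = t * rAct Sinv α h := by
  let rt := ℛ k t
  let rt₁ a := ℛ k (rt.left a)
  let rh := ℛ k h
  let Ψ : H →ₗ[k] H := ∑ l ∈ rh.index,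
    (α ∘ₗ Sinv ∘ₗ LinearMap.mulRight k (rh.right l)).smulRight (rh.left l)
  have hΨ : ∀ y, Ψ y = ∑ l ∈ rh.index, α (Sinv (y * rh.right l)) • rh.left l := by
    simp [Ψ]
  have expand : ∀ i, rAct Sinv (αA i) (rAct Sinv (αB i ∘ₗ Sinv) t * h) =
      ∑ a ∈ rt.index, ∑ p ∈ ((rt₁ a).mul rh).index,
        (αA i (Sinv (((rt₁ a).mul rh).right p)) * αB i (Sinv (Sinv (rt.right a)))) •
          ((rt₁ a).mul rh).left p := by
    intro i
    rw [rAct_apply Sinv _ rt, Finset.sum_mul, map_sum]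
    refine Finset.sum_congr rfl fun a _ => ?_
    rw [smul_mul_assoc, map_smul, rAct_apply Sinv _ ((rt₁ a).mul rh), Finset.smul_sum]
    simp only [LinearMap.comp_apply, smul_smul, mul_comm]
  calc ∑ i, rAct Sinv (αA i) (rAct Sinv (αB i ∘ₗ Sinv) t * h)
      = ∑ a ∈ rt.index, ∑ p ∈ ((rt₁ a).mul rh).index,
          α (Sinv (((rt₁ a).mul rh).right p) * Sinv (Sinv (rt.right a))) •
            ((rt₁ a).mul rh).left p := by
        simp only [expand]
        rw [Finset.sum_comm]
        refine Finset.sum_congr rfl fun a _ => ?_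
        rw [Finset.sum_comm]
        simp only [← Finset.sum_smul, hα]
    _ = ∑ a ∈ rt.index, ∑ b ∈ (rt₁ a).index,
          (rt₁ a).left b * Ψ (Sinv (rt.right a) * (rt₁ a).right b) := by
        refine Finset.sum_congr rfl fun a _ => ?_
        simp only [Repr.mul_index, Repr.mul_left, Repr.mul_right, Finset.sum_product, hΨ,
          Finset.mul_sum, mul_smul_comm, ← antipodeInv_mul hS1 hS2, mul_assoc]
    _ = LinearMap.mul' k H (LinearMap.lTensor H Ψ (∑ a ∈ rt.index, ∑ b ∈ (rt₁ a).index,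
          (rt₁ a).left b ⊗ₜ[k] (Sinv (rt.right a) * (rt₁ a).right b))) := by
        simp only [map_sum, LinearMap.lTensor_tmul, LinearMap.mul'_apply]
    _ = t * rAct Sinv α h := by
        rw [sum_tmul_antipodeInv_mul_eq hS1 hS2, LinearMap.lTensor_tmul, LinearMap.mul'_apply,
          hΨ, rAct_apply Sinv α rh]
        simp only [one_mul]

end RightAction

section Rmap

variable {k H V W : Type*} [CommSemiring k] [Semiring H] [AddCommMonoid V] [Module k V]
  [AddCommMonoid W] [Module k W]

@[simp]
theorem Rmap_tmul_tmul [Algebra k H] (f : V →ₗ[k] W) (h : H) (v : V) (t : H) :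
    Rmap k H V W (f ⊗ₜ h) (v ⊗ₜ t) = f v ⊗ₜ (t * h) := by
  simp [Rmap]

theorem Rmap_injective [Algebra k H] [Module.Projective k V] [Module.Finite k V] :
    Function.Injective (Rmap k H V W) := by
  have eval_one : ∀ z v, rTensorHomToHomRTensor (.id k) V W H z v = Rmap k H V W z (v ⊗ₜ 1) := by
    intro z v
    induction z using TensorProduct.induction_on with
    | zero => simp
    | tmul f h => simp
    | add z₁ z₂ h₁ h₂ => simp [h₁, h₂]
  intro z₁ z₂ h
  apply (rTensorHomEquivHomRTensor k V W H).injective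
  ext v
  simp [eval_one, h]

theorem Rmap_tmul_comp_Rmap_tmul [Algebra k H] {U : Type*} [AddCommMonoid U] [Module k U]
    (f : U →ₗ[k] W) (g : V →ₗ[k] U) (h t : H) :
    Rmap k H U W (f ⊗ₜ h) ∘ₗ Rmap k H V U (g ⊗ₜ t) = Rmap k H V W ((f ∘ₗ g) ⊗ₜ (t * h)) := by
  ext v s
  simp [mul_assoc]

theorem Rmap_id_tmul_one [Algebra k H] : Rmap k H V V (LinearMap.id ⊗ₜ 1) = LinearMap.id := by
  ext v t
  simp

theorem Rmap_lTensor_rAct [HopfAlgebra k H] {Sinv : H →ₗ[k] H}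
    (hS1 : ∀ x, Sinv (antipode k x) = x) (hS2 : ∀ x, antipode k (Sinv x) = x)
    {α : Module.Dual k H} {ι : Type*} [Fintype ι] {αA αB : ι → Module.Dual k H}
    (hα : ∀ x y, α (x * y) = ∑ i, αA i x * αB i y) (z : (V →ₗ[k] W) ⊗[k] H) :
    Rmap k H V W (LinearMap.lTensor _ (rAct Sinv α) z) =
      ∑ i, LinearMap.lTensor W (rAct Sinv (αA i)) ∘ₗ Rmap k H V W z ∘ₗ
        LinearMap.lTensor V (rAct Sinv (αB i ∘ₗ Sinv)) := by
  induction z using TensorProduct.induction_on with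
  | zero => simp
  | tmul f h =>
    ext v t
    simp [← sum_rAct_rAct_mul hS1 hS2 hα t h, tmul_sum]
  | add z₁ z₂ h₁ h₂ =>
    simp only [map_add, h₁, h₂, LinearMap.add_comp, LinearMap.comp_add, Finset.sum_add_distrib]

end Rmap

theorem stmt11_general {k H : Type*} [Field k] [Ring H] [HopfAlgebra k H]
    (Sinv : H →ₗ[k] H)
    (hS1 : ∀ x, Sinv ((HopfAlgebra.antipode (R := k) : H →ₗ[k] H) x) = x)
    (hS2 : ∀ x, (HopfAlgebra.antipode (R := k) : H →ₗ[k] H) (Sinv x) = x)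
    (V W : Type*) [AddCommGroup V] [Module k V] [FiniteDimensional k V]
    [AddCommGroup W] [Module k W] :
    -- `R'` is injective
    Function.Injective (Rmap k H V W) ∧
    -- `R'` is a map of right `H*`-modules
    (∀ (z : (V →ₗ[k] W) ⊗[k] H) (α : Module.Dual k H)
        (ι : Type) [Fintype ι] (αA αB : ι → Module.Dual k H),
      (∀ x y : H, α (x * y) = ∑ i, αA i x * αB i y) →
      ∀ m : V ⊗[k] H,
        ∑ i, (LinearMap.lTensor W (rAct Sinv (αA i)))
            ((Rmap k H V W z) ((LinearMap.lTensor V (rAct Sinv ((αB i) ∘ₗ Sinv))) m))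
          = (Rmap k H V W ((LinearMap.lTensor (V →ₗ[k] W) (rAct Sinv α)) z)) m) ∧
    -- when `V = W`, `R'` is an algebra map `End(V) ⊗ H^op → End(V ⊗ H)`
    (∀ (f g : V →ₗ[k] V) (h t : H),
      Rmap k H V V ((f ∘ₗ g) ⊗ₜ[k] (t * h))
        = Rmap k H V V (f ⊗ₜ[k] h) ∘ₗ Rmap k H V V (g ⊗ₜ[k] t)) ∧
    Rmap k H V V ((LinearMap.id : V →ₗ[k] V) ⊗ₜ[k] (1 : H)) = LinearMap.id := by
  refine ⟨Rmap_injective, fun z α ι _ αA αB hα m => ?_,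
    fun f g h t => (Rmap_tmul_comp_Rmap_tmul f g h t).symm, Rmap_id_tmul_one⟩
  rw [Rmap_lTensor_rAct hS1 hS2 hα z]
  simp only [LinearMap.coe_sum, Finset.sum_apply, LinearMap.comp_apply]

theorem stmt11 {k H : Type*} [Field k] [Ring H] [HopfAlgebra k H] [FiniteDimensional k H]
    (Sinv : H →ₗ[k] H)
    (hS1 : ∀ x, Sinv ((HopfAlgebra.antipode (R := k) : H →ₗ[k] H) x) = x)
    (hS2 : ∀ x, (HopfAlgebra.antipode (R := k) : H →ₗ[k] H) (Sinv x) = x)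
    (V W : Type*) [AddCommGroup V] [Module k V] [FiniteDimensional k V]
    [AddCommGroup W] [Module k W] [FiniteDimensional k W] :
    -- `R'` is injective
    Function.Injective (Rmap k H V W) ∧
    -- `R'` is a map of right `H*`-modules
    (∀ (z : (V →ₗ[k] W) ⊗[k] H) (α : Module.Dual k H)
        (ι : Type) [Fintype ι] (αA αB : ι → Module.Dual k H),
      (∀ x y : H, α (x * y) = ∑ i, αA i x * αB i y) →
      ∀ m : V ⊗[k] H,
        ∑ i, (LinearMap.lTensor W (rAct Sinv (αA i)))
            ((Rmap k H V W z) ((LinearMap.lTensor V (rAct Sinv ((αB i) ∘ₗ Sinv))) m))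
          = (Rmap k H V W ((LinearMap.lTensor (V →ₗ[k] W) (rAct Sinv α)) z)) m) ∧
    -- when `V = W`, `R'` is an algebra map `End(V) ⊗ H^op → End(V ⊗ H)`
    (∀ (f g : V →ₗ[k] V) (h t : H),
      Rmap k H V V ((f ∘ₗ g) ⊗ₜ[k] (t * h))
        = Rmap k H V V (f ⊗ₜ[k] h) ∘ₗ Rmap k H V V (g ⊗ₜ[k] t)) ∧
    Rmap k H V V ((LinearMap.id : V →ₗ[k] V) ⊗ₜ[k] (1 : H)) = LinearMap.id :=
  stmt11_general Sinv hS1 hS2 V W
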